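/- arXiv:1808.07611 — 2 statements merged into one kernel-verified Lean document; each statement's English description precedes it below -/
import Mathlib

section
/- Let $W$ be an $n \times n$ Hermitian matrix, let $\lambda_i(W)$ be an eigenvalue with unit eigenvector $u$, and let $x_k$ denote the $k$-th coordinate of $u$. Let $W_k$ be the matrix with the $k$-th row and column removed, with eigenvalues $\lambda_j(W_k)$ and orthonormal eigenvectors $u_j(W_k)$, and let $a_k$ be the $k$-th column of $W$ with the $k$-th entry removed. If no eigenvalue of $W_k$ equals $\lambda_i(W)$, then $|x_k|^2 = \left(1 + \sum_{j=1}^{n-1} (\lambda_j(W_k) - \lambda_i(W))^{-2} |u_j(W_k)^* a_k|^2\right)^{-1}$. -/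
/-!
Write `u'` for `u` with its `k`-th coordinate removed. The rows of `W u = μ u` other than the
`k`-th say `(μ - W_k) u' = u_k a_k`; pairing with the left eigenvector `u_j(W_k)^*` of the
Hermitian minor gives `(μ - λ_j) ⟨u_j, u'⟩ = u_k ⟨u_j, a_k⟩`. Since the `u_j(W_k)` form an
orthonormal basis, Parseval turns `|u_k|^2 + ‖u'‖^2 = 1` into
`|u_k|^2 (1 + ∑ |⟨u_j, a_k⟩|^2 / (λ_j - μ)^2) = 1`.
-/

open Matrix

section

variable {𝕜 : Type*} [RCLike 𝕜]

theorem Matrix.star_dotProduct_self_eq_sum_norm_sq {ι : Type*} [Fintype ι] (x : ι → 𝕜) :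
    star x ⬝ᵥ x = ((∑ i, ‖x i‖ ^ 2 : ℝ) : 𝕜) := by
  simp [dotProduct, RCLike.star_def, RCLike.conj_mul]

theorem Matrix.sum_norm_sq_star_dotProduct_of_orthonormal {ι : Type*} [Fintype ι] [DecidableEq ι]
    {v : ι → ι → 𝕜} (hv : ∀ i j, star (v i) ⬝ᵥ v j = if i = j then 1 else 0) (x : ι → 𝕜) :
    ∑ j, ‖star (v j) ⬝ᵥ x‖ ^ 2 = ∑ i, ‖x i‖ ^ 2 := by
  let V : Matrix ι ι 𝕜 := of fun j i => star (v j i)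
  have hVVh : V * Vᴴ = 1 := by
    ext i j
    simpa [V, mul_apply, one_apply, dotProduct] using hv i j
  have hV : star (V *ᵥ x) ⬝ᵥ V *ᵥ x = star x ⬝ᵥ x := by
    rw [star_mulVec, dotProduct_mulVec, vecMul_vecMul, mul_eq_one_comm.mp hVVh, vecMul_one]
  rw [star_dotProduct_self_eq_sum_norm_sq, star_dotProduct_self_eq_sum_norm_sq] at hV
  exact_mod_cast hV

theorem Matrix.mulVec_succAbove {R : Type*} [CommSemiring R] {n : ℕ}
    (W : Matrix (Fin (n + 1)) (Fin (n + 1)) R) (u : Fin (n + 1) → R) (k : Fin (n + 1))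
    (j : Fin n) :
    (W *ᵥ u) (k.succAbove j) =
      (W.submatrix k.succAbove k.succAbove *ᵥ (u ∘ k.succAbove)) j + u k * W (k.succAbove j) k := by
  simp only [mulVec, dotProduct, Fin.sum_univ_succAbove _ k, submatrix_apply, Function.comp_apply]
  ring

theorem Matrix.IsHermitian.star_vecMul_of_mulVec_eq_smul {ι : Type*} [Fintype ι]
    {A : Matrix ι ι 𝕜} (hA : A.IsHermitian) {v : ι → 𝕜} {l : ℝ} (hv : A *ᵥ v = (l : 𝕜) • v) :
    star v ᵥ* A = (l : 𝕜) • star v := by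
  rw [← hA.eq, ← star_mulVec, hv, star_smul, RCLike.star_def, RCLike.conj_ofReal]

theorem Matrix.sub_mul_dotProduct_of_vecMul_eq_smul {R ι : Type*} [CommRing R] [Fintype ι]
    {A : Matrix ι ι R} {w x a : ι → R} {l μ c : R} (hw : w ᵥ* A = l • w)
    (hx : A *ᵥ x + c • a = μ • x) : (μ - l) * (w ⬝ᵥ x) = c * (w ⬝ᵥ a) := by
  have h := congrArg (w ⬝ᵥ ·) hx
  simp only [dotProduct_add, dotProduct_smul, dotProduct_mulVec, hw, smul_dotProduct,
    smul_eq_mul] at h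
  linear_combination -h

theorem norm_sq_eq_of_sub_mul_eq {l μ : ℝ} (h : l ≠ μ) {c z b : 𝕜}
    (hc : ((μ : 𝕜) - l) * c = z * b) :
    ‖c‖ ^ 2 = ((l - μ) ^ 2)⁻¹ * ‖b‖ ^ 2 * ‖z‖ ^ 2 := by
  have hnorm := congrArg (‖·‖ ^ 2) hc
  simp only [norm_mul, mul_pow, ← RCLike.ofReal_sub, RCLike.norm_ofReal, sq_abs] at hnorm
  have : (μ - l) ^ 2 ≠ 0 := pow_ne_zero _ (sub_ne_zero.mpr h.symm)
  field_simp
  linear_combination hnorm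

end

/-- Formula for an eigenvector coordinate of a Hermitian matrix in terms of the
spectral data of the minor (Lemma 41 of Tao–Vu). -/
theorem eigenvector_coordinate_formula (n : ℕ)
    (W : Matrix (Fin (n + 1)) (Fin (n + 1)) ℂ) (hW : W.IsHermitian)
    (μ : ℝ) (u : Fin (n + 1) → ℂ)
    (hu : W *ᵥ u = (μ : ℂ) • u) (hunit : star u ⬝ᵥ u = 1)
    (k : Fin (n + 1))
    (Wk : Matrix (Fin n) (Fin n) ℂ) (hWk : Wk = W.submatrix k.succAbove k.succAbove)
    (a : Fin n → ℂ) (ha : ∀ j, a j = W (k.succAbove j) k)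
    (lam : Fin n → ℝ) (v : Fin n → Fin n → ℂ)
    (hv : ∀ j, Wk *ᵥ v j = (lam j : ℂ) • v j)
    (horth : ∀ i j, star (v i) ⬝ᵥ v j = if i = j then 1 else 0)
    (hne : ∀ j, lam j ≠ μ) :
    ‖u k‖ ^ 2 = (1 + ∑ j, ((lam j - μ) ^ 2)⁻¹ * ‖star (v j) ⬝ᵥ a‖ ^ 2)⁻¹ := by
  let u' := u ∘ k.succAbove
  have hrow : Wk *ᵥ u' + u k • a = (μ : ℂ) • u' := funext fun j => by
    have h := congrFun hu (k.succAbove j)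
    rw [mulVec_succAbove, ← hWk, ← ha] at h
    simpa [u'] using h
  have hcoord : ∀ j, ‖star (v j) ⬝ᵥ u'‖ ^ 2 =
      ((lam j - μ) ^ 2)⁻¹ * ‖star (v j) ⬝ᵥ a‖ ^ 2 * ‖u k‖ ^ 2 := fun j =>
    norm_sq_eq_of_sub_mul_eq (hne j) <| sub_mul_dotProduct_of_vecMul_eq_smul
      ((hWk ▸ hW.submatrix k.succAbove).star_vecMul_of_mulVec_eq_smul (hv j)) hrow
  have hsplit : ‖u k‖ ^ 2 + ∑ i, ‖u' i‖ ^ 2 = 1 := by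
    rw [star_dotProduct_self_eq_sum_norm_sq, Fin.sum_univ_succAbove _ k] at hunit
    exact RCLike.ofReal_inj.mp (hunit.trans RCLike.ofReal_one.symm)
  rw [← sum_norm_sq_star_dotProduct_of_orthonormal horth, Finset.sum_congr rfl fun j _ => hcoord j,
    ← Finset.sum_mul] at hsplit
  exact eq_inv_of_mul_eq_one_left (by linear_combination hsplit)
end

section
/- Let $W$ be an $n \times n$ Hermitian matrix, $z = x + i\eta$ with $\eta > 0$, and let $\Sigma$ be a real diagonal matrix with diagonal entries in $[0,1]$, and $\Sigma^{(k)}$ the $(n-1)\times(n-1)$ diagonal matrix obtained by deleting the $k$-th diagonal entry. Then $\left|\operatorname{tr}\big[(W - zI)^{-1}\Sigma\big] - \operatorname{tr}\big[(W_k - zI)^{-1}\Sigma^{(k)}\big]\right| \le \frac{1}{\eta}$, where $W_k$ is the minor of $W$ with the $k$-th row and column removed. -/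
/-!
Write `G = (W - z)⁻¹`. By the Schur complement formula the resolvent of the minor is
`G i j - G i k * G k j / G k k`, so the difference of the weighted traces is
`(∑ i, σ i * G k i * G i k) / G k k`. By AM-GM the numerator is at most
`(∑ i, |G k i|² + ∑ i, |G i k|²) / 2`, and the Ward identity
`Im (G k k) = η ∑ i, |G k i|² = η ∑ i, |G i k|²` turns this into `Im (G k k) / η ≤ |G k k| / η`.
-/

open Matrix

namespace Matrix

section Resolvent

variable {m : Type*} [Fintype m] [DecidableEq m]

theorem IsHermitian.isUnit_sub_smul_one {H : Matrix m m ℂ} (hH : H.IsHermitian) {z : ℂ}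
    (hz : z.im ≠ 0) : IsUnit (H - z • 1) := by
  have hz_notMem : z ∉ spectrum ℂ H := by
    rw [hH.spectrum_eq_image_range]
    rintro ⟨r, -, rfl⟩
    exact hz (Complex.ofReal_im r)
  rw [spectrum.notMem_iff, Algebra.algebraMap_eq_smul_one] at hz_notMem
  simpa using hz_notMem.neg

section StarRing

variable {R : Type*} [CommRing R] [StarRing R] {M : Matrix m m R}

theorem nonsing_inv_sub_conjTranspose_eq_mul (hM : IsUnit M.det) :
    M⁻¹ - M⁻¹ᴴ = M⁻¹ * (Mᴴ - M) * M⁻¹ᴴ := by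
  have hMH : IsUnit Mᴴ.det := by rw [det_conjTranspose]; exact hM.star
  rw [Matrix.mul_sub, Matrix.sub_mul, conjTranspose_nonsing_inv, Matrix.mul_assoc,
    mul_nonsing_inv _ hMH, nonsing_inv_mul _ hM, Matrix.mul_one, Matrix.one_mul]

theorem nonsing_inv_sub_conjTranspose_eq_mul' (hM : IsUnit M.det) :
    M⁻¹ - M⁻¹ᴴ = M⁻¹ᴴ * (Mᴴ - M) * M⁻¹ := by
  have hMH : IsUnit Mᴴ.det := by rw [det_conjTranspose]; exact hM.star
  rw [Matrix.mul_sub, Matrix.sub_mul, conjTranspose_nonsing_inv, nonsing_inv_mul _ hMH,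
    Matrix.mul_assoc, mul_nonsing_inv _ hM, Matrix.mul_one, Matrix.one_mul]

end StarRing

omit [DecidableEq m] in
theorem mul_conjTranspose_apply_self (G : Matrix m m ℂ) (k : m) :
    (G * Gᴴ) k k = ((∑ i, ‖G k i‖ ^ 2 : ℝ) : ℂ) := by
  simp [Matrix.mul_apply, Complex.mul_conj, Complex.normSq_eq_norm_sq]

omit [DecidableEq m] in
theorem conjTranspose_mul_apply_self (G : Matrix m m ℂ) (k : m) :
    (Gᴴ * G) k k = ((∑ i, ‖G i k‖ ^ 2 : ℝ) : ℂ) := by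
  simp [Matrix.mul_apply, Complex.conj_mul']

omit [Fintype m] in
theorem IsHermitian.conjTranspose_sub_smul_one_sub {H : Matrix m m ℂ} (hH : H.IsHermitian)
    (z : ℂ) : (H - z • 1)ᴴ - (H - z • 1) = ((2 * z.im : ℝ) * Complex.I) • 1 := by
  rw [conjTranspose_sub, hH.eq, conjTranspose_smul, conjTranspose_one, sub_sub_sub_cancel_left,
    ← sub_smul, Complex.star_def, Complex.sub_conj]

/-- The Ward identity, read off the diagonal. -/
theorem IsHermitian.im_inv_sub_smul_one_apply_self {H : Matrix m m ℂ} (hH : H.IsHermitian)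
    {z : ℂ} (hz : z.im ≠ 0) (k : m) :
    ((H - z • 1)⁻¹ k k).im = z.im * ∑ i, ‖(H - z • 1)⁻¹ k i‖ ^ 2 ∧
      ((H - z • 1)⁻¹ k k).im = z.im * ∑ i, ‖(H - z • 1)⁻¹ i k‖ ^ 2 := by
  have hM := (isUnit_iff_isUnit_det _).1 (hH.isUnit_sub_smul_one hz)
  have im_eq (s : ℝ) (h : (H - z • 1)⁻¹ k k - star ((H - z • 1)⁻¹ k k)
      = ((2 * z.im : ℝ) * Complex.I) * s) : ((H - z • 1)⁻¹ k k).im = z.im * s := by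
    have := congrArg Complex.im h
    simp [Complex.sub_conj] at this
    linarith
  constructor
  · apply im_eq
    have := congrFun₂ (nonsing_inv_sub_conjTranspose_eq_mul hM) k k
    rwa [hH.conjTranspose_sub_smul_one_sub, Matrix.mul_smul, Matrix.mul_one, smul_mul,
      smul_apply, mul_conjTranspose_apply_self, sub_apply, conjTranspose_apply, smul_eq_mul]
      at this
  · apply im_eq
    have := congrFun₂ (nonsing_inv_sub_conjTranspose_eq_mul' hM) k k
    rwa [hH.conjTranspose_sub_smul_one_sub, Matrix.mul_smul, Matrix.mul_one, smul_mul,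
      smul_apply, conjTranspose_mul_apply_self, sub_apply, conjTranspose_apply, smul_eq_mul]
      at this

end Resolvent

section Minor

variable {K : Type*} [Field K] {n : ℕ}

theorem inv_apply_self_eq_det_submatrix_div (M : Matrix (Fin (n + 1)) (Fin (n + 1)) K)
    (k : Fin (n + 1)) : M⁻¹ k k = (M.submatrix k.succAbove k.succAbove).det / M.det := by
  rw [inv_def, smul_apply, adjugate_fin_succ_eq_det_submatrix,
    (Even.add_self (k : ℕ)).neg_one_pow, one_mul, Ring.inverse_eq_inv', smul_eq_mul,
    div_eq_inv_mul]

theorem inv_submatrix_succAbove_apply {M : Matrix (Fin (n + 1)) (Fin (n + 1)) K}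
    (hM : IsUnit M.det) {k : Fin (n + 1)} (hk : M⁻¹ k k ≠ 0) (i j : Fin n) :
    (M.submatrix k.succAbove k.succAbove)⁻¹ i j = M⁻¹ (k.succAbove i) (k.succAbove j)
      - M⁻¹ (k.succAbove i) k * M⁻¹ k (k.succAbove j) / M⁻¹ k k := by
  set G := M⁻¹
  have hGM (a b : Fin (n + 1)) : ∑ l, G a (k.succAbove l) * M (k.succAbove l) b
      = (1 : Matrix _ _ K) a b - G a k * M k b := by
    rw [← nonsing_inv_mul M hM, mul_apply, Fin.sum_univ_succAbove _ k, add_sub_cancel_left]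
  suffices h : (of fun i j => G (k.succAbove i) (k.succAbove j)
      - G (k.succAbove i) k * G k (k.succAbove j) / G k k)
        * M.submatrix k.succAbove k.succAbove = 1 by
    rw [inv_eq_left_inv h, of_apply]
  ext i j
  have hsucc : (1 : Matrix _ _ K) (k.succAbove i) (k.succAbove j) = (1 : Matrix _ _ K) i j := by
    simp only [one_apply, Fin.succAbove_right_inj]
  have hk_ne : (1 : Matrix _ _ K) k (k.succAbove j) = 0 :=
    one_apply_ne (Fin.succAbove_ne k j).symm
  calc ∑ l, (G (k.succAbove i) (k.succAbove l)
          - G (k.succAbove i) k * G k (k.succAbove l) / G k k) * M (k.succAbove l) (k.succAbove j)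
      = ∑ l, G (k.succAbove i) (k.succAbove l) * M (k.succAbove l) (k.succAbove j)
          - G (k.succAbove i) k / G k k
            * ∑ l, G k (k.succAbove l) * M (k.succAbove l) (k.succAbove j) := by
        rw [Finset.mul_sum, ← Finset.sum_sub_distrib]
        exact Finset.sum_congr rfl fun l _ => by ring
    _ = (1 : Matrix _ _ K) i j := by
        rw [hGM, hGM, hsucc, hk_ne]
        field_simp
        ring

theorem trace_inv_mul_diagonal_sub_trace_inv_submatrix
    {M : Matrix (Fin (n + 1)) (Fin (n + 1)) K} (hM : IsUnit M.det) {k : Fin (n + 1)}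
    (hk : M⁻¹ k k ≠ 0) (d : Fin (n + 1) → K) :
    (M⁻¹ * diagonal d).trace
        - ((M.submatrix k.succAbove k.succAbove)⁻¹ * diagonal (fun j => d (k.succAbove j))).trace
      = (∑ i, d i * (M⁻¹ k i * M⁻¹ i k)) / M⁻¹ k k := by
  simp only [trace, diag_apply, mul_diagonal, inv_submatrix_succAbove_apply hM hk]
  rw [Fin.sum_univ_succAbove _ k, Fin.sum_univ_succAbove (fun i => d i * _) k, add_sub_assoc,
    ← Finset.sum_sub_distrib, add_div, Finset.sum_div]
  congr 1
  · field_simp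
  · exact Finset.sum_congr rfl fun j _ => by field_simp; ring

end Minor

end Matrix

theorem norm_sum_ofReal_mul_mul_le {𝕜 ι : Type*} [RCLike 𝕜] [Fintype ι] {σ : ι → ℝ}
    (hσ : ∀ i, σ i ∈ Set.Icc (0 : ℝ) 1) (a b : ι → 𝕜) :
    ‖∑ i, (σ i : 𝕜) * (a i * b i)‖ ≤ (∑ i, ‖a i‖ ^ 2 + ∑ i, ‖b i‖ ^ 2) / 2 := by
  rw [← Finset.sum_add_distrib, Finset.sum_div]
  refine (norm_sum_le _ _).trans (Finset.sum_le_sum fun i _ => ?_)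
  obtain ⟨hσ₀, hσ₁⟩ := hσ i
  rw [norm_mul, norm_mul, RCLike.norm_ofReal, abs_of_nonneg hσ₀]
  nlinarith [sq_nonneg (‖a i‖ - ‖b i‖), mul_nonneg (norm_nonneg (a i)) (norm_nonneg (b i))]

/-- Weighted trace stability under removing one row and column: the weighted
resolvent trace changes by at most `1/η`. -/
theorem weighted_trace_minor_stability (n : ℕ)
    (W : Matrix (Fin (n + 1)) (Fin (n + 1)) ℂ) (hW : W.IsHermitian)
    (x η : ℝ) (hη : 0 < η) (z : ℂ) (hz : z = x + η * Complex.I)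
    (σ : Fin (n + 1) → ℝ) (hσ : ∀ i, σ i ∈ Set.Icc (0 : ℝ) 1) (k : Fin (n + 1)) :
    ‖((W - z • 1)⁻¹ * Matrix.diagonal (fun i => (σ i : ℂ))).trace
        - ((W.submatrix k.succAbove k.succAbove - z • 1)⁻¹
            * Matrix.diagonal (fun j => (σ (k.succAbove j) : ℂ))).trace‖
      ≤ 1 / η := by
  have hz_im : z.im = η := by simp [hz]
  have hz_ne : z.im ≠ 0 := hz_im ▸ hη.ne'
  have hM := (isUnit_iff_isUnit_det _).1 (hW.isUnit_sub_smul_one hz_ne)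
  have hminor : W.submatrix k.succAbove k.succAbove - z • 1
      = (W - z • 1).submatrix k.succAbove k.succAbove := by
    rw [← submatrix_one _ Fin.succAbove_right_injective]; rfl
  have hGkk : (W - z • 1)⁻¹ k k ≠ 0 := by
    rw [inv_apply_self_eq_det_submatrix_div, ← hminor]
    exact div_ne_zero ((isUnit_iff_isUnit_det _).1
      ((hW.submatrix _).isUnit_sub_smul_one hz_ne)).ne_zero hM.ne_zero
  obtain ⟨hrow, hcol⟩ := hW.im_inv_sub_smul_one_apply_self hz_ne k
  rw [hminor, trace_inv_mul_diagonal_sub_trace_inv_submatrix hM hGkk, norm_div]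
  set G := (W - z • 1)⁻¹
  calc ‖∑ i, (σ i : ℂ) * (G k i * G i k)‖ / ‖G k k‖
      ≤ ((∑ i, ‖G k i‖ ^ 2 + ∑ i, ‖G i k‖ ^ 2) / 2) / ‖G k k‖ := by
        gcongr; exact norm_sum_ofReal_mul_mul_le hσ _ _
    _ = (G k k).im / η / ‖G k k‖ := by
        rw [hz_im] at hrow hcol
        field_simp
        linarith
    _ ≤ ‖G k k‖ / η / ‖G k k‖ := by gcongr; exact Complex.im_le_norm _
    _ = 1 / η := by field_simp
end
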